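/- Let A be a commutative ring and M a free A-module with basis m_1, …, m_n. Then the k-th graded piece Γ_k(M) of the divided power algebra Γ_A(M) is a free A-module with basis the set of products of divided powers {m_1^{[i_1]} · m_2^{[i_2]} ⋯ m_n^{[i_n]} : i_1 + ⋯ + i_n = k, i_j ≥ 0}. -/

import Mathlib

open scoped TensorProduct

universe u v

/-- A system of divided powers on a module `M` with values in a commutative `A`-algebra `B`. -/
structure IsDPSystem (A : Type u) [CommRing A] {M : Type v} [AddCommGroup M] [Module A M]
    {B : Type*} [CommRing B] [Algebra A B] (φ : ℕ → M → B) : Prop where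
  zero : ∀ m, φ 0 m = 1
  smul : ∀ (k : ℕ) (a : A) (m : M), φ k (a • m) = a ^ k • φ k m
  add : ∀ (k : ℕ) (m n : M),
    φ k (m + n) = ∑ ij ∈ Finset.HasAntidiagonal.antidiagonal k, φ ij.1 m * φ ij.2 n
  mul : ∀ (i j : ℕ) (m : M), φ i m * φ j m = ((i + j).choose i) • φ (i + j) m

/-- The divided power algebra `Γ_A(M)`, presented as a graded commutative `A`-algebra
equipped with divided power operations `dpow k : M → Γ_k`, universal among commutative
`A`-algebras receiving a system of divided powers of `M`. -/
structure DividedPowerAlgebra' (A : Type u) [CommRing A] (M : Type v) [AddCommGroup M]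
    [Module A M] where
  Γ : Type (max u v)
  [commRing : CommRing Γ]
  [algebra : Algebra A Γ]
  grading : ℕ → Submodule A Γ
  [gradedAlgebra : GradedAlgebra grading]
  dpow : ℕ → M → Γ
  dpow_mem : ∀ (k : ℕ) (m : M), dpow k m ∈ grading k
  isDP : IsDPSystem A dpow
  dpow_one_injective : Function.Injective (dpow 1)
  grading_one_eq : grading 1 = Submodule.span A (Set.range (dpow 1))
  lift : ∀ {B : Type (max u v)} [CommRing B] [Algebra A B] (φ : ℕ → M → B),
      IsDPSystem A φ → (Γ →ₐ[A] B)
  lift_dpow : ∀ {B : Type (max u v)} [CommRing B] [Algebra A B] (φ : ℕ → M → B)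
      (h : IsDPSystem A φ) (k : ℕ) (m : M), lift φ h (dpow k m) = φ k m
  lift_unique : ∀ {B : Type (max u v)} [CommRing B] [Algebra A B] (φ : ℕ → M → B)
      (h : IsDPSystem A φ) (g : Γ →ₐ[A] B), (∀ k m, g (dpow k m) = φ k m) → g = lift φ h

attribute [instance] DividedPowerAlgebra'.commRing DividedPowerAlgebra'.algebra
  DividedPowerAlgebra'.gradedAlgebra

/-!
Spanning: `Γ(M)` is generated by the divided powers `m^{[k]}`, and expanding `m = ∑ c_j m_j`
with the sum and scalar rules writes `m^{[k]}` as a combination of degree-`k` products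
`m_1^{[i_1]} ⋯ m_n^{[i_n]}`. These products are closed under multiplication up to binomial
coefficients, so their spans form a multiplicative family of submodules of the graded pieces
containing generators of `Γ(M)`, and hence exhaust them.

Independence: in `ℚ[x_1, …, x_n]` the `ℤ`-span of the `x^α / α!` is a subring `ℤ⟨x⟩`, free
over `ℤ` on these monomials. Over `B = A ⊗[ℤ] ℤ⟨x⟩` the series `E_j(T) = ∑ₖ (x_j^k / k!) T^k`
satisfy `E_j(S) E_j(T) = E_j(S + T)`, so the coefficients of `m ↦ ∏_j E_j(c_j(m) T)` are divided
powers on `M` with `m_j^{[k]} = x_j^k / k!`. The universal property of `Γ(M)` then sends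
`m_1^{[α_1]} ⋯ m_n^{[α_n]}` to the basis vector `1 ⊗ x^α / α!` of `B`.
-/

open Finset PowerSeries

section IsDPSystem

variable {A M B : Type*} [CommRing A] [AddCommGroup M] [Module A M] [CommRing B] [Algebra A B]
  {φ : ℕ → M → B}

theorem IsDPSystem.apply_zero_of_ne_zero (h : IsDPSystem A φ) {k : ℕ} (hk : k ≠ 0) :
    φ k 0 = 0 := by
  simpa [zero_pow hk] using h.smul k 0 0

theorem IsDPSystem.map (h : IsDPSystem A φ) {C : Type*} [CommRing C] [Algebra A C]
    (f : B →ₐ[A] C) : IsDPSystem A (fun k m => f (φ k m)) where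
  zero m := by rw [h.zero, map_one]
  smul k a m := by rw [h.smul, map_smul]
  add k m m' := by rw [h.add, map_sum]; simp only [map_mul]
  mul i j m := by rw [← map_mul, h.mul, map_nsmul]

theorem IsDPSystem.codRestrict (h : IsDPSystem A φ) (S : Subalgebra A B)
    (hS : ∀ k m, φ k m ∈ S) : IsDPSystem A (fun k m => (⟨φ k m, hS k m⟩ : S)) where
  zero m := Subtype.ext (h.zero m)
  smul k a m := Subtype.ext (h.smul k a m)
  add k m m' := Subtype.ext (by simpa using h.add k m m')
  mul i j m := Subtype.ext (by simpa using h.mul i j m)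

end IsDPSystem

namespace PowerSeries

variable {R : Type*} [CommRing R]

/-- The coefficientwise form of `f(S) f(T) = f(S + T)`. -/
structure IsExponential (f : R⟦X⟧) : Prop where
  constantCoeff_eq_one : constantCoeff f = 1
  coeff_mul_coeff : ∀ i j, coeff i f * coeff j f = (i + j).choose i • coeff (i + j) f

namespace IsExponential

theorem one : IsExponential (1 : R⟦X⟧) where
  constantCoeff_eq_one := map_one _
  coeff_mul_coeff i j := by
    rcases Nat.eq_zero_or_pos i with rfl | hi
    · rcases Nat.eq_zero_or_pos j with rfl | hj
      · simp
      · simp [hj.ne']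
    · simp [hi.ne']

theorem rescale {f : R⟦X⟧} (hf : IsExponential f) (a : R) : IsExponential (rescale a f) where
  constantCoeff_eq_one := by
    rw [← coeff_zero_eq_constantCoeff_apply, coeff_rescale, pow_zero, one_mul,
      coeff_zero_eq_constantCoeff_apply, hf.constantCoeff_eq_one]
  coeff_mul_coeff i j := by
    simp only [coeff_rescale, mul_mul_mul_comm, ← pow_add, hf.coeff_mul_coeff, mul_smul_comm]

theorem map {S : Type*} [CommRing S] {f : R⟦X⟧} (hf : IsExponential f) (φ : R →+* S) :
    IsExponential (PowerSeries.map φ f) where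
  constantCoeff_eq_one := by
    rw [← coeff_zero_eq_constantCoeff_apply, coeff_map, coeff_zero_eq_constantCoeff_apply,
      hf.constantCoeff_eq_one, map_one]
  coeff_mul_coeff i j := by simp only [coeff_map, ← map_mul, hf.coeff_mul_coeff, map_nsmul]

theorem mul {f g : R⟦X⟧} (hf : IsExponential f) (hg : IsExponential g) :
    IsExponential (f * g) where
  constantCoeff_eq_one := by
    rw [map_mul, hf.constantCoeff_eq_one, hg.constantCoeff_eq_one, one_mul]
  coeff_mul_coeff i j := by
    have lhs : coeff i (f * g) * coeff j (f * g) = ∑ x ∈ antidiagonal i ×ˢ antidiagonal j,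
        ((x.1.1 + x.2.1).choose x.1.1 * (x.1.2 + x.2.2).choose x.1.2) •
          (coeff (x.1.1 + x.2.1) f * coeff (x.1.2 + x.2.2) g) := by
      rw [coeff_mul, coeff_mul, sum_mul_sum, ← sum_product']
      refine sum_congr rfl fun x _ => ?_
      rw [mul_mul_mul_comm, hf.coeff_mul_coeff, hg.coeff_mul_coeff, smul_mul_smul_comm]
    -- Vandermonde's identity splits `(i + j).choose i` along the degrees of `f` and `g`.
    have rhs : (i + j).choose i • coeff (i + j) (f * g) =
        ∑ y ∈ antidiagonal (i + j) ×ˢ antidiagonal i,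
          (y.1.1.choose y.2.1 * y.1.2.choose y.2.2) • (coeff y.1.1 f * coeff y.1.2 g) := by
      rw [coeff_mul, smul_sum, sum_product]
      refine sum_congr rfl fun y hy => ?_
      dsimp only
      rw [← sum_smul, ← Nat.add_choose_eq, HasAntidiagonal.mem_antidiagonal.mp hy]
    rw [lhs, rhs]
    -- The terms of `rhs` outside the image of this reindexing have a vanishing binomial.
    refine sum_of_injOn (fun x => ((x.1.1 + x.2.1, x.1.2 + x.2.2), x.1)) ?_ ?_ ?_ fun _ _ => rfl
    · rintro ⟨⟨p, q⟩, ⟨r, s⟩⟩ - ⟨⟨p', q'⟩, ⟨r', s'⟩⟩ - h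
      simp only [Prod.mk.injEq] at h ⊢
      omega
    · rintro ⟨⟨p, q⟩, ⟨r, s⟩⟩ h
      simp only [coe_product, Set.mem_prod, mem_coe, HasAntidiagonal.mem_antidiagonal] at h ⊢
      omega
    · rintro ⟨⟨u, v⟩, ⟨p, q⟩⟩ hy hne
      simp only [mem_product, HasAntidiagonal.mem_antidiagonal] at hy
      have hlt : u < p ∨ v < q := by
        by_contra! hle
        exact hne ⟨((p, q), (u - p, v - q)), by simp; omega, by ext <;> simp <;> omega⟩
      rcases hlt with h | h <;> simp [Nat.choose_eq_zero_of_lt h]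

theorem prod {ι : Type*} {s : Finset ι} {f : ι → R⟦X⟧} (hf : ∀ i ∈ s, IsExponential (f i)) :
    IsExponential (∏ i ∈ s, f i) :=
  Finset.prod_induction f IsExponential (fun _ _ => mul) one hf

theorem rescale_add {f : R⟦X⟧} (hf : IsExponential f) (a b : R) :
    PowerSeries.rescale (a + b) f = PowerSeries.rescale a f * PowerSeries.rescale b f := by
  ext n
  rw [coeff_rescale, coeff_mul, (Commute.all a b).add_pow', sum_mul]
  refine sum_congr rfl fun x hx => ?_
  rw [coeff_rescale, coeff_rescale, mul_mul_mul_comm, hf.coeff_mul_coeff,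
    HasAntidiagonal.mem_antidiagonal.mp hx, smul_mul_assoc, mul_smul_comm]

end IsExponential

end PowerSeries

section ExpOfBasis

variable {A M B : Type*} [CommRing A] [AddCommGroup M] [Module A M] [CommRing B] [Algebra A B]

theorem isDPSystem_coeff {E : M → B⟦X⟧} (hE : ∀ m, (E m).IsExponential)
    (hadd : ∀ m m', E (m + m') = E m * E m')
    (hsmul : ∀ (a : A) m, E (a • m) = rescale (algebraMap A B a) (E m)) :
    IsDPSystem A (fun k m => coeff k (E m)) where
  zero m := by rw [coeff_zero_eq_constantCoeff_apply, (hE m).constantCoeff_eq_one]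
  smul k a m := by rw [hsmul, coeff_rescale, ← map_pow, ← Algebra.smul_def]
  add k m m' := by rw [hadd, coeff_mul]
  mul i j m := (hE m).coeff_mul_coeff i j

variable {ι : Type*} [Fintype ι]

noncomputable def expOfBasis (b : Module.Basis ι A M) (E : ι → B⟦X⟧) (m : M) : B⟦X⟧ :=
  ∏ j, rescale (algebraMap A B (b.repr m j)) (E j)

variable (b : Module.Basis ι A M) {E : ι → B⟦X⟧}

theorem isDPSystem_coeff_expOfBasis (hE : ∀ j, (E j).IsExponential) :
    IsDPSystem A (fun k m => coeff k (expOfBasis b E m)) := by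
  refine isDPSystem_coeff (fun m => IsExponential.prod fun j _ => (hE j).rescale _)
    (fun m m' => ?_) (fun a m => ?_)
  · simp only [expOfBasis, map_add, Finsupp.add_apply, (hE _).rescale_add, prod_mul_distrib]
  · simp only [expOfBasis, map_smul, Finsupp.smul_apply, smul_eq_mul, map_prod]
    refine prod_congr rfl fun j _ => ?_
    rw [mul_comm, map_mul, rescale_mul, RingHom.comp_apply]

theorem expOfBasis_basis [DecidableEq ι] (hE : ∀ j, (E j).IsExponential) (t : ι) :
    expOfBasis b E (b t) = E t := by
  rw [expOfBasis, Fintype.prod_eq_single t fun j hj => ?_]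
  · simp
  · rw [Module.Basis.repr_self, Finsupp.single_eq_of_ne hj, map_zero, rescale_zero_apply,
      (hE j).constantCoeff_eq_one, map_one]

end ExpOfBasis

namespace MvPolynomial

section DividedPowerMonomials

variable {σ : Type*}

open Nat in
noncomputable def dpX (j : σ) (p : ℕ) : MvPolynomial σ ℚ := (p ! : ℚ)⁻¹ • X j ^ p

open Nat in
theorem dpX_mul_dpX (j : σ) (p q : ℕ) :
    dpX j p * dpX j q = (p + q).choose p • dpX j (p + q) := by
  have key : ((p ! : ℚ)⁻¹ * (q ! : ℚ)⁻¹) = (p + q).choose p * ((p + q)! : ℚ)⁻¹ := by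
    rw [← Nat.add_choose_mul_factorial_mul_factorial p q, ← Nat.choose_symm_add]
    have hc : ((p + q).choose p : ℚ) ≠ 0 := by
      exact_mod_cast (Nat.choose_pos (Nat.le_add_right p q)).ne'
    push_cast
    rw [mul_inv, mul_inv, ← mul_assoc, ← mul_assoc, mul_inv_cancel₀ hc, one_mul]
  rw [dpX, dpX, dpX, smul_mul_smul, ← pow_add, key, ← smul_smul, Nat.cast_smul_eq_nsmul]

@[simp]
theorem dpX_zero (j : σ) : dpX j 0 = 1 := by simp [dpX]

variable [Fintype σ]

noncomputable def dpMonomial (α : σ → ℕ) : MvPolynomial σ ℚ := ∏ j, dpX j (α j)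

theorem dpMonomial_mul (α β : σ → ℕ) :
    dpMonomial α * dpMonomial β = (∏ j, (α j + β j).choose (α j)) • dpMonomial (α + β) := by
  rw [dpMonomial, dpMonomial, dpMonomial, ← prod_mul_distrib, nsmul_eq_mul, Nat.cast_prod,
    ← prod_mul_distrib]
  refine prod_congr rfl fun j _ => ?_
  rw [dpX_mul_dpX, nsmul_eq_mul, Pi.add_apply]

theorem dpMonomial_zero : dpMonomial (0 : σ → ℕ) = 1 := by simp [dpMonomial]

theorem dpX_eq_dpMonomial [DecidableEq σ] (j : σ) (p : ℕ) :
    dpX j p = dpMonomial (Pi.single j p) := by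
  rw [dpMonomial, Fintype.prod_eq_single j fun i hi => by rw [Pi.single_eq_of_ne hi, dpX_zero],
    Pi.single_eq_same]

open Nat in
theorem dpMonomial_eq_monomial (α : σ → ℕ) :
    dpMonomial α = monomial (Finsupp.equivFunOnFinite.symm α) (∏ j, ((α j)! : ℚ)⁻¹) := by
  rw [← Finsupp.univ_sum_single (Finsupp.equivFunOnFinite.symm α), monomial_sum_prod]
  simp [dpMonomial, dpX, X_pow_eq_monomial, smul_monomial]

theorem linearIndependent_dpMonomial : LinearIndependent ℤ (dpMonomial (σ := σ)) := by
  have hmon := ((basisMonomials σ ℚ).linearIndependent.comp _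
    Finsupp.equivFunOnFinite.symm.injective).units_smul
    fun α : σ → ℕ => Units.mk0 (∏ j, ((α j).factorial : ℚ)⁻¹) (by positivity)
  convert hmon.restrict_scalars' ℤ using 1
  ext1 α
  simp [dpMonomial_eq_monomial, smul_monomial]

theorem span_dpMonomial_mul_le :
    Submodule.span ℤ (Set.range (dpMonomial (σ := σ))) *
        Submodule.span ℤ (Set.range dpMonomial) ≤
      Submodule.span ℤ (Set.range dpMonomial) := by
  rw [Submodule.span_mul_span, Submodule.span_le]
  rintro _ ⟨_, ⟨α, rfl⟩, _, ⟨β, rfl⟩, rfl⟩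
  change dpMonomial α * dpMonomial β ∈ _
  rw [dpMonomial_mul]
  exact Submodule.smul_of_tower_mem _ _ (Submodule.subset_span ⟨α + β, rfl⟩)

end DividedPowerMonomials

variable (σ : Type*) [Fintype σ]

/-- The divided power polynomial ring `ℤ⟨x_σ⟩`, realised inside `ℚ[x_σ]`. -/
noncomputable def dpPolynomials : Subalgebra ℤ (MvPolynomial σ ℚ) :=
  (Submodule.span ℤ (Set.range dpMonomial)).toSubalgebra
    (Submodule.subset_span ⟨0, dpMonomial_zero⟩)
    fun _ _ hx hy => span_dpMonomial_mul_le (Submodule.mul_mem_mul hx hy)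

variable {σ}

noncomputable def dpBasis : Module.Basis (σ → ℕ) ℤ (dpPolynomials σ) :=
  (Module.Basis.span linearIndependent_dpMonomial).map (dpPolynomials σ).toSubmoduleEquiv

@[simp]
theorem coe_dpBasis (α : σ → ℕ) : (dpBasis α : MvPolynomial σ ℚ) = dpMonomial α :=
  congrArg Subtype.val (Module.Basis.span_apply linearIndependent_dpMonomial α)

variable [DecidableEq σ]

theorem dpBasis_single_mul (j : σ) (p q : ℕ) :
    dpBasis (Pi.single j p) * dpBasis (Pi.single j q) =
      (p + q).choose p • dpBasis (Pi.single j (p + q)) := by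
  ext1
  simp only [MulMemClass.coe_mul, AddSubmonoidClass.coe_nsmul, coe_dpBasis, ← dpX_eq_dpMonomial,
    dpX_mul_dpX]

theorem prod_dpBasis_single (α : σ → ℕ) : ∏ j, dpBasis (Pi.single j (α j)) = dpBasis α := by
  ext1
  simp only [SubmonoidClass.coe_finsetProd, coe_dpBasis, ← dpX_eq_dpMonomial]
  rfl

noncomputable def dpSeries (j : σ) : (dpPolynomials σ)⟦X⟧ :=
  PowerSeries.mk fun p => dpBasis (Pi.single j p)

theorem isExponential_dpSeries (j : σ) : (dpSeries j).IsExponential where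
  constantCoeff_eq_one := by
    ext1
    simp [dpSeries, dpMonomial_zero]
  coeff_mul_coeff p q := by simp only [dpSeries, coeff_mk, dpBasis_single_mul]

end MvPolynomial

section DpowOfBasis

open MvPolynomial

variable {A M : Type*} [CommRing A] [AddCommGroup M] [Module A M]
  {ι : Type*} [Fintype ι] [DecidableEq ι] (b : Module.Basis ι A M)

noncomputable def dpowOfBasis (k : ℕ) (m : M) : A ⊗[ℤ] dpPolynomials ι :=
  coeff k (expOfBasis b (fun j => PowerSeries.map
    (Algebra.TensorProduct.includeRight : dpPolynomials ι →ₐ[ℤ] A ⊗[ℤ] dpPolynomials ι).toRingHom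
    (dpSeries j)) m)

theorem isDPSystem_dpowOfBasis : IsDPSystem A (dpowOfBasis b) :=
  isDPSystem_coeff_expOfBasis b fun j => (isExponential_dpSeries j).map _

theorem dpowOfBasis_basis (k : ℕ) (j : ι) :
    dpowOfBasis b k (b j) = Algebra.TensorProduct.includeRight (dpBasis (Pi.single j k)) := by
  rw [dpowOfBasis, expOfBasis_basis b (fun j => (isExponential_dpSeries j).map _),
    PowerSeries.coeff_map, dpSeries, coeff_mk]
  rfl

theorem prod_dpowOfBasis_basis (α : ι → ℕ) :
    ∏ j, dpowOfBasis b (α j) (b j) = Algebra.TensorProduct.basis A dpBasis α := by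
  simp only [dpowOfBasis_basis, ← map_prod, prod_dpBasis_single,
    Algebra.TensorProduct.basis_apply]
  rfl

end DpowOfBasis

theorem GradedAlgebra.eq_of_adjoin_eq_top {ι R A : Type*} [DecidableEq ι] [AddMonoid ι]
    [CommSemiring R] [Semiring A] [Algebra R A] (𝒜 : ι → Submodule R A) [GradedAlgebra 𝒜]
    (N : ι → Submodule R A) (hN : ∀ i, N i ≤ 𝒜 i) (hone : 1 ∈ N 0)
    (hmul : ∀ i j, N i * N j ≤ N (i + j)) {s : Set A} (hs : Algebra.adjoin R s = ⊤)
    (hsN : ∀ x ∈ s, ∃ i, x ∈ N i) (k : ι) : N k = 𝒜 k := by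
  have hsup_mul : (⨆ i, N i) * (⨆ i, N i) ≤ ⨆ i, N i := by
    rw [Submodule.iSup_mul]
    refine iSup_le fun i => ?_
    rw [Submodule.mul_iSup]
    exact iSup_le fun j => (hmul i j).trans (le_iSup N (i + j))
  have hsup (x : A) : x ∈ ⨆ i, N i := by
    have hx : x ∈ Algebra.adjoin R s := hs ▸ Algebra.mem_top
    induction hx using Algebra.adjoin_induction with
    | mem x hx =>
      obtain ⟨i, hi⟩ := hsN x hx
      exact le_iSup N i hi
    | algebraMap r =>
      rw [Algebra.algebraMap_eq_smul_one]
      exact Submodule.smul_mem _ r (le_iSup N 0 hone)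
    | add x y _ _ hx hy => exact add_mem hx hy
    | mul x y _ _ hx hy => exact hsup_mul (Submodule.mul_mem_mul hx hy)
  refine le_antisymm (hN k) fun x hx => ?_
  rw [← DirectSum.decompose_of_mem_same 𝒜 hx, ← GradedAlgebra.proj_apply]
  refine Submodule.iSup_induction N (motive := fun y => GradedAlgebra.proj 𝒜 k y ∈ N k) (hsup x)
    (fun i y hy => ?_) (by rw [map_zero]; exact zero_mem _)
    (fun y z hy hz => by rw [map_add]; exact add_mem hy hz)
  rcases eq_or_ne i k with rfl | hik
  · rwa [GradedAlgebra.proj_apply, DirectSum.decompose_of_mem_same 𝒜 (hN i hy)]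
  · rw [GradedAlgebra.proj_apply, DirectSum.decompose_of_mem_ne 𝒜 (hN i hy) hik]
    exact zero_mem _

namespace DividedPowerAlgebra'

variable {A : Type u} [CommRing A] {M : Type v} [AddCommGroup M] [Module A M]
  (G : DividedPowerAlgebra' A M)

theorem adjoin_dpow_eq_top : Algebra.adjoin A {x | ∃ k m, G.dpow k m = x} = ⊤ := by
  set S := Algebra.adjoin A {x | ∃ k m, G.dpow k m = x}
  have hS (k : ℕ) (m : M) : G.dpow k m ∈ S := Algebra.subset_adjoin ⟨k, m, rfl⟩
  let g := S.val.comp (G.lift _ (G.isDP.codRestrict S hS))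
  have hg : g = AlgHom.id A G.Γ :=
    (G.lift_unique _ G.isDP g fun k m => congrArg Subtype.val (G.lift_dpow _ _ k m)).trans
      (G.lift_unique _ G.isDP _ fun _ _ => rfl).symm
  refine eq_top_iff.mpr fun x _ => ?_
  rw [← AlgHom.id_apply (R := A) x, ← hg]
  exact (G.lift _ (G.isDP.codRestrict S hS) x).2

section DpowMonomial

variable {ι : Type*} [Fintype ι] (b : Module.Basis ι A M)

noncomputable def dpowMonomial (α : ι → ℕ) : G.Γ := ∏ j, G.dpow (α j) (b j)

noncomputable def dpowMonomialSpan (d : ℕ) : Submodule A G.Γ :=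
  Submodule.span A (Set.range fun α : {α : ι → ℕ // ∑ j, α j = d} => G.dpowMonomial b α)

theorem dpowMonomial_mem_dpowMonomialSpan (α : ι → ℕ) :
    G.dpowMonomial b α ∈ G.dpowMonomialSpan b (∑ j, α j) :=
  Submodule.subset_span ⟨⟨α, rfl⟩, rfl⟩

theorem dpowMonomial_mul (α β : ι → ℕ) :
    G.dpowMonomial b α * G.dpowMonomial b β =
      (∏ j, (α j + β j).choose (α j)) • G.dpowMonomial b (α + β) := by
  simp only [dpowMonomial, ← prod_mul_distrib, G.isDP.mul, nsmul_eq_mul, Nat.cast_prod,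
    Pi.add_apply]

theorem dpowMonomial_single [DecidableEq ι] (t : ι) (k : ℕ) :
    G.dpowMonomial b (Pi.single t k) = G.dpow k (b t) := by
  rw [dpowMonomial, Fintype.prod_eq_single t fun j hj => by rw [Pi.single_eq_of_ne hj, G.isDP.zero],
    Pi.single_eq_same]

theorem dpowMonomialSpan_le_grading (d : ℕ) : G.dpowMonomialSpan b d ≤ G.grading d := by
  refine Submodule.span_le.mpr ?_
  rintro _ ⟨⟨α, rfl⟩, rfl⟩
  exact SetLike.prod_mem_graded G.grading α _ fun j _ => G.dpow_mem (α j) (b j)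

theorem one_mem_dpowMonomialSpan : 1 ∈ G.dpowMonomialSpan b 0 := by
  simpa [dpowMonomial, G.isDP.zero] using G.dpowMonomial_mem_dpowMonomialSpan b 0

theorem dpowMonomialSpan_mul_le (d e : ℕ) :
    G.dpowMonomialSpan b d * G.dpowMonomialSpan b e ≤ G.dpowMonomialSpan b (d + e) := by
  rw [dpowMonomialSpan, dpowMonomialSpan, Submodule.span_mul_span, Submodule.span_le]
  rintro _ ⟨_, ⟨⟨α, rfl⟩, rfl⟩, _, ⟨⟨β, rfl⟩, rfl⟩, rfl⟩
  change G.dpowMonomial b α * G.dpowMonomial b β ∈ _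
  rw [dpowMonomial_mul, ← sum_add_distrib]
  exact Submodule.smul_of_tower_mem _ _ (G.dpowMonomial_mem_dpowMonomialSpan b (α + β))

theorem dpow_mem_dpowMonomialSpan [DecidableEq ι] (m : M) (k : ℕ) :
    G.dpow k m ∈ G.dpowMonomialSpan b k := by
  have hm : m ∈ Submodule.span A (Set.range b) := b.span_eq ▸ Submodule.mem_top
  induction hm using Submodule.span_induction generalizing k with
  | mem _ hx =>
    obtain ⟨t, rfl⟩ := hx
    simpa [dpowMonomial_single] using G.dpowMonomial_mem_dpowMonomialSpan b (Pi.single t k)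
  | zero =>
    rcases eq_or_ne k 0 with rfl | hk
    · rw [G.isDP.zero]
      exact G.one_mem_dpowMonomialSpan b
    · rw [G.isDP.apply_zero_of_ne_zero hk]
      exact zero_mem _
  | add x y _ _ hx hy =>
    rw [G.isDP.add]
    refine sum_mem fun p hp => ?_
    rw [← HasAntidiagonal.mem_antidiagonal.mp hp]
    exact G.dpowMonomialSpan_mul_le b _ _ (Submodule.mul_mem_mul (hx p.1) (hy p.2))
  | smul a x _ hx =>
    rw [G.isDP.smul]
    exact Submodule.smul_mem _ _ (hx k)

theorem dpowMonomialSpan_eq_grading [DecidableEq ι] (k : ℕ) :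
    G.dpowMonomialSpan b k = G.grading k :=
  GradedAlgebra.eq_of_adjoin_eq_top G.grading _ (G.dpowMonomialSpan_le_grading b)
    (G.one_mem_dpowMonomialSpan b) (G.dpowMonomialSpan_mul_le b) G.adjoin_dpow_eq_top
    (by rintro _ ⟨i, m, rfl⟩; exact ⟨i, G.dpow_mem_dpowMonomialSpan b m i⟩) k

end DpowMonomial

-- `ι : Type` keeps the model `A ⊗[ℤ] ℤ⟨x_ι⟩` in a universe that `ULift` can raise to that of `Γ`,
-- the only universe the universal property `G.lift` maps into.
theorem linearIndependent_dpowMonomial {ι : Type} [Fintype ι] [DecidableEq ι]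
    (b : Module.Basis ι A M) : LinearIndependent A (G.dpowMonomial b) := by
  let e : ULift.{v} (A ⊗[ℤ] MvPolynomial.dpPolynomials ι) ≃ₐ[A] _ := ULift.algEquiv
  let L := e.toAlgHom.comp (G.lift _ ((isDPSystem_dpowOfBasis b).map e.symm.toAlgHom))
  have hL (α : ι → ℕ) :
      L (G.dpowMonomial b α) = Algebra.TensorProduct.basis A MvPolynomial.dpBasis α := by
    simp [L, dpowMonomial, map_prod, G.lift_dpow, prod_dpowOfBasis_basis]
  refine LinearIndependent.of_comp L.toLinearMap ?_
  rw [show ⇑L.toLinearMap ∘ _ = _ from funext hL]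
  exact (Algebra.TensorProduct.basis A MvPolynomial.dpBasis).linearIndependent

end DividedPowerAlgebra'

/-- If `M` is a free `A`-module with basis `m_1, …, m_n`, then the `k`-th
graded piece `Γ_k(M)` of the divided power algebra is a free `A`-module with basis the
products of divided powers `m_1^{[i_1]} ⋯ m_n^{[i_n]}` with `i_1 + ⋯ + i_n = k`. -/
theorem gammaGraded_free_on_dividedPowerProducts
    {A : Type u} [CommRing A] {M : Type v} [AddCommGroup M] [Module A M]
    {n : ℕ} (b : Module.Basis (Fin n) A M)
    (G : DividedPowerAlgebra' A M) (k : ℕ) :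
    ∃ bas : Module.Basis {i : Fin n → ℕ // ∑ j, i j = k} A (G.grading k),
      ∀ i : {i : Fin n → ℕ // ∑ j, i j = k},
        (bas i : G.Γ) = ∏ j, G.dpow (i.1 j) (b j) := by
  have hli : LinearIndependent A fun i : {i : Fin n → ℕ // ∑ j, i j = k} => G.dpowMonomial b i :=
    (G.linearIndependent_dpowMonomial b).comp _ Subtype.val_injective
  refine ⟨(Module.Basis.span hli).map (LinearEquiv.ofEq _ _ (G.dpowMonomialSpan_eq_grading b k)),
    fun i => ?_⟩
  rw [Module.Basis.map_apply]
  exact congrArg Subtype.val (Module.Basis.span_apply hli i)
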